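/- arXiv:1803.05413 — 2 statements merged into one kernel-verified Lean document; each statement's English description precedes it below -/
import Mathlib

section
/- Let V : ℝ³ → ℝ be measurable and let C > 0 be such that for every differentiable function φ : ℝ³ → ℂ with φ and ∇φ square-integrable, ∫_{ℝ³} |V(x)|² |φ(x)|² dx ≤ C (∫ |φ|² + ∫ |∇φ|²). Then for every ε > 0 and every differentiable ψ : ℝ³ × ℝ³ → ℂ with ψ and its full gradient square-integrable on ℝ⁶, |∬_{ℝ³×ℝ³} V(x−y) |ψ(x,y)|² dx dy| ≤ ε ∬ |∇ₓψ(x,y)|² dx dy + (ε + C/(4ε)) ∬ |ψ(x,y)|² dx dy, where ∇ₓ denotes the gradient in the first variable. -/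
/-!
Pointwise, `|V| ≤ δ V² + 1/(4δ)` for every `δ > 0`; take `δ = ε / C`. For fixed `y`, the
hypothesis applied to the translate `x ↦ ψ (x + y, y)` bounds `∫ V(x - y)² |ψ(x, y)|² dx` by
`C (‖ψ(·, y)‖² + ‖∇ₓψ(·, y)‖²)`, and Tonelli integrates this over `y`. Working with lower Lebesgue
integrals throughout makes the slices along which `ψ` or `∇ₓψ` fails to be square-integrable
harmless: the bound is then `∞`.
-/

open MeasureTheory
open scoped ENNReal

theorem abs_le_mul_sq_add_inv_four_mul {δ : ℝ} (hδ : 0 < δ) (a : ℝ) :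
    |a| ≤ δ * a ^ 2 + (4 * δ)⁻¹ := by
  rw [← sq_abs a]
  field_simp
  nlinarith [sq_nonneg (2 * δ * |a| - 1)]

theorem enorm_le_ofReal_mul_enorm_sq_add {δ : ℝ} (hδ : 0 < δ) (a : ℝ) :
    ‖a‖ₑ ≤ ENNReal.ofReal δ * ‖a‖ₑ ^ 2 + ENNReal.ofReal (4 * δ)⁻¹ := by
  rw [← ofReal_norm, ← ENNReal.ofReal_pow (norm_nonneg _), ← ENNReal.ofReal_mul hδ.le,
    ← ENNReal.ofReal_add (by positivity) (by positivity), Real.norm_eq_abs, sq_abs]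
  exact ENNReal.ofReal_le_ofReal (abs_le_mul_sq_add_inv_four_mul hδ a)

namespace MeasureTheory

theorem lintegral_enorm_mul_le {α : Type*} [MeasurableSpace α] {μ : Measure α} {δ : ℝ}
    (hδ : 0 < δ) (f : α → ℝ) {g : α → ℝ≥0∞} (hg : Measurable g) :
    ∫⁻ x, ‖f x‖ₑ * g x ∂μ
      ≤ ENNReal.ofReal δ * (∫⁻ x, ‖f x‖ₑ ^ 2 * g x ∂μ)
        + ENNReal.ofReal (4 * δ)⁻¹ * ∫⁻ x, g x ∂μ := by
  calc ∫⁻ x, ‖f x‖ₑ * g x ∂μ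
      ≤ ∫⁻ x, ENNReal.ofReal δ * (‖f x‖ₑ ^ 2 * g x) + ENNReal.ofReal (4 * δ)⁻¹ * g x ∂μ := by
        refine lintegral_mono fun x => ?_
        grw [enorm_le_ofReal_mul_enorm_sq_add hδ (f x)]
        exact (add_mul _ _ _).trans_le (by rw [mul_assoc])
    _ = _ := by
        rw [lintegral_add_right _ (hg.const_mul _),
          lintegral_const_mul' _ _ ENNReal.ofReal_ne_top, lintegral_const_mul _ hg]

section SquareIntegrable

variable {α F : Type*} [MeasurableSpace α] {μ : Measure α} [NormedAddCommGroup F] {f : α → F}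

theorem MemLp.lintegral_enorm_sq_eq (hf : MemLp f 2 μ) :
    ∫⁻ x, ‖f x‖ₑ ^ 2 ∂μ = ENNReal.ofReal (∫ x, ‖f x‖ ^ 2 ∂μ) := by
  rw [ofReal_integral_eq_lintegral_ofReal ((memLp_two_iff_integrable_sq_norm hf.1).mp hf)
    (ae_of_all _ fun x => by positivity)]
  simp_rw [ENNReal.ofReal_pow (norm_nonneg _), ofReal_norm]

theorem memLp_two_of_lintegral_enorm_sq_ne_top (hf : AEStronglyMeasurable f μ)
    (h : ∫⁻ x, ‖f x‖ₑ ^ 2 ∂μ ≠ ⊤) : MemLp f 2 μ := by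
  refine (memLp_two_iff_integrable_sq_norm hf).mpr ⟨hf.norm.pow 2, ?_⟩
  rw [hasFiniteIntegral_iff_enorm]
  simpa [enorm_pow] using h.lt_top

end SquareIntegrable

theorem norm_integral_le_of_lintegral_enorm_le {α G : Type*} [MeasurableSpace α] {μ : Measure α}
    [NormedAddCommGroup G] [NormedSpace ℝ G] {f : α → G} {r : ℝ} (hr : 0 ≤ r)
    (h : ∫⁻ x, ‖f x‖ₑ ∂μ ≤ ENNReal.ofReal r) : ‖∫ x, f x ∂μ‖ ≤ r := by
  rw [← ENNReal.ofReal_le_ofReal_iff hr, ofReal_norm]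
  exact (enorm_integral_le_lintegral_enorm f).trans h

end MeasureTheory

section PartialDerivative

variable {𝕜 E F G : Type*} [NontriviallyNormedField 𝕜] [NormedAddCommGroup E] [NormedSpace 𝕜 E]
  [NormedAddCommGroup F] [NormedSpace 𝕜 F] [NormedAddCommGroup G] [NormedSpace 𝕜 G]
  {ψ : E × F → G}

theorem DifferentiableAt.fderiv_comp_prodMk_left {a : E} {b : F}
    (hψ : DifferentiableAt 𝕜 ψ (a, b)) :
    fderiv 𝕜 (fun x => ψ (x, b)) a = (fderiv 𝕜 ψ (a, b)).comp (ContinuousLinearMap.inl 𝕜 E F) :=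
  (hψ.hasFDerivAt.comp a (hasFDerivAt_prodMk_left a b)).fderiv

theorem DifferentiableAt.norm_fderiv_comp_prodMk_left_le {a : E} {b : F}
    (hψ : DifferentiableAt 𝕜 ψ (a, b)) :
    ‖fderiv 𝕜 (fun x => ψ (x, b)) a‖ ≤ ‖fderiv 𝕜 ψ (a, b)‖ := by
  rw [hψ.fderiv_comp_prodMk_left]
  exact (ContinuousLinearMap.opNorm_comp_le _ _).trans
    (mul_le_of_le_one_right (norm_nonneg _) (ContinuousLinearMap.norm_inl_le_one 𝕜 E F))

theorem Differentiable.fderiv_comp_prodMk_left_eq (hψ : Differentiable 𝕜 ψ) :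
    (fun q : E × F => fderiv 𝕜 (fun x => ψ (x, q.2)) q.1)
      = fun q => (fderiv 𝕜 ψ q).comp (ContinuousLinearMap.inl 𝕜 E F) :=
  funext fun q => (hψ q).fderiv_comp_prodMk_left

theorem Differentiable.measurable_fderiv_comp_prodMk_left [MeasurableSpace (E × F)]
    [OpensMeasurableSpace (E × F)] [CompleteSpace G] (hψ : Differentiable 𝕜 ψ) :
    Measurable fun q : E × F => fderiv 𝕜 (fun x => ψ (x, q.2)) q.1 := by
  rw [hψ.fderiv_comp_prodMk_left_eq]
  fun_prop

end PartialDerivative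

section FormBound

variable {E : Type*} [NormedAddCommGroup E] [NormedSpace ℝ E] [MeasureSpace E]

/-- `V² ≤ C (1 - Δ)` as quadratic forms, tested on differentiable `φ` with `φ, ∇φ ∈ L²`. -/
def SqFormBounded (V : E → ℝ) (C : ℝ) : Prop :=
  ∀ φ : E → ℂ, Differentiable ℝ φ →
    MemLp φ 2 volume → MemLp (fun x => fderiv ℝ φ x) 2 volume →
    ∫⁻ x, (‖V x‖₊ : ℝ≥0∞) ^ 2 * (‖φ x‖₊ : ℝ≥0∞) ^ 2
      ≤ ENNReal.ofReal (C * ((∫ x, ‖φ x‖ ^ 2) + ∫ x, ‖fderiv ℝ φ x‖ ^ 2))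

variable [FiniteDimensional ℝ E] [BorelSpace E] {V : E → ℝ} {C : ℝ}

theorem SqFormBounded.lintegral_le (hV : SqFormBounded V C) (hC : 0 < C) {φ : E → ℂ}
    (hφ : Differentiable ℝ φ) :
    ∫⁻ x, ‖V x‖ₑ ^ 2 * ‖φ x‖ₑ ^ 2
      ≤ ENNReal.ofReal C * ((∫⁻ x, ‖φ x‖ₑ ^ 2) + ∫⁻ x, ‖fderiv ℝ φ x‖ₑ ^ 2) := by
  by_cases hfin : ∫⁻ x, ‖φ x‖ₑ ^ 2 ≠ ⊤ ∧ ∫⁻ x, ‖fderiv ℝ φ x‖ₑ ^ 2 ≠ ⊤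
  · have hφ2 := memLp_two_of_lintegral_enorm_sq_ne_top hφ.continuous.aestronglyMeasurable hfin.1
    have hDφ2 := memLp_two_of_lintegral_enorm_sq_ne_top
      (measurable_fderiv ℝ φ).aestronglyMeasurable hfin.2
    rw [hφ2.lintegral_enorm_sq_eq, hDφ2.lintegral_enorm_sq_eq,
      ← ENNReal.ofReal_add (by positivity) (by positivity), ← ENNReal.ofReal_mul hC.le]
    exact hV φ hφ hφ2 hDφ2
  · have htop : (∫⁻ x, ‖φ x‖ₑ ^ 2) + ∫⁻ x, ‖fderiv ℝ φ x‖ₑ ^ 2 = ⊤ := by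
      rw [not_and_or, not_not, not_not] at hfin
      rcases hfin with h | h <;> simp [h]
    rw [htop, ENNReal.mul_top (by simpa using hC)]
    exact le_top

variable [(volume : Measure E).IsAddRightInvariant]

theorem SqFormBounded.lintegral_comp_sub_le (hV : SqFormBounded V C) (hC : 0 < C) {φ : E → ℂ}
    (hφ : Differentiable ℝ φ) (y : E) :
    ∫⁻ x, ‖V (x - y)‖ₑ ^ 2 * ‖φ x‖ₑ ^ 2
      ≤ ENNReal.ofReal C * ((∫⁻ x, ‖φ x‖ₑ ^ 2) + ∫⁻ x, ‖fderiv ℝ φ x‖ₑ ^ 2) := by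
  have h := hV.lintegral_le hC (hφ.comp (differentiable_id.add_const y))
  simp only [Function.comp_def, id, fderiv_comp_add_right] at h
  rw [lintegral_add_right_eq_self (fun x => ‖φ x‖ₑ ^ 2) y,
    lintegral_add_right_eq_self (fun x => ‖fderiv ℝ φ x‖ₑ ^ 2) y] at h
  calc ∫⁻ x, ‖V (x - y)‖ₑ ^ 2 * ‖φ x‖ₑ ^ 2
      = ∫⁻ x, ‖V x‖ₑ ^ 2 * ‖φ (x + y)‖ₑ ^ 2 := by
        rw [← lintegral_add_right_eq_self _ y]
        simp only [add_sub_cancel_right]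
    _ ≤ _ := h

variable [SFinite (volume : Measure E)]

theorem SqFormBounded.lintegral_comp_sub_prod_le (hV : SqFormBounded V C) (hC : 0 < C)
    {ψ : E × E → ℂ} (hψ : Differentiable ℝ ψ) :
    ∫⁻ p : E × E, ‖V (p.1 - p.2)‖ₑ ^ 2 * ‖ψ p‖ₑ ^ 2
      ≤ ENNReal.ofReal C * ((∫⁻ p, ‖ψ p‖ₑ ^ 2)
          + ∫⁻ p : E × E, ‖fderiv ℝ (fun x => ψ (x, p.2)) p.1‖ₑ ^ 2) := by
  have hψ2 : Measurable fun p => ‖ψ p‖ₑ ^ 2 := hψ.continuous.measurable.enorm.pow_const 2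
  have hDψ2 : Measurable fun p : E × E => ‖fderiv ℝ (fun x => ψ (x, p.2)) p.1‖ₑ ^ 2 := by
    have := hψ.measurable_fderiv_comp_prodMk_left
    fun_prop
  calc ∫⁻ p : E × E, ‖V (p.1 - p.2)‖ₑ ^ 2 * ‖ψ p‖ₑ ^ 2
      = ∫⁻ p : E × E, ‖V (p.2 - p.1)‖ₑ ^ 2 * ‖ψ p.swap‖ₑ ^ 2 :=
        (lintegral_prod_swap (fun p : E × E => ‖V (p.1 - p.2)‖ₑ ^ 2 * ‖ψ p‖ₑ ^ 2)).symm
    _ ≤ ∫⁻ y, ∫⁻ x, ‖V (x - y)‖ₑ ^ 2 * ‖ψ (x, y)‖ₑ ^ 2 := lintegral_prod_le _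
    _ ≤ ∫⁻ y, ENNReal.ofReal C * ((∫⁻ x, ‖ψ (x, y)‖ₑ ^ 2)
          + ∫⁻ x, ‖fderiv ℝ (fun x => ψ (x, y)) x‖ₑ ^ 2) :=
        lintegral_mono fun y => hV.lintegral_comp_sub_le hC
          (hψ.comp (differentiable_id.prodMk (differentiable_const y))) y
    _ = _ := by
        rw [lintegral_const_mul' _ _ ENNReal.ofReal_ne_top,
          lintegral_add_left hψ2.lintegral_prod_left', Measure.volume_eq_prod,
          lintegral_prod_symm' _ hψ2, lintegral_prod_symm' _ hDψ2]

theorem SqFormBounded.abs_integral_comp_sub_mul_le (hV : SqFormBounded V C) (hC : 0 < C)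
    {ε : ℝ} (hε : 0 < ε) {ψ : E × E → ℂ} (hψdiff : Differentiable ℝ ψ) (hψ : MemLp ψ 2 volume)
    (hψ' : MemLp (fderiv ℝ ψ) 2 volume) :
    |∫ p : E × E, V (p.1 - p.2) * ‖ψ p‖ ^ 2|
      ≤ ε * (∫ p : E × E, ‖fderiv ℝ (fun x => ψ (x, p.2)) p.1‖ ^ 2)
        + (ε + C / (4 * ε)) * ∫ p : E × E, ‖ψ p‖ ^ 2 := by
  have hDψ : MemLp (fun p : E × E => fderiv ℝ (fun x => ψ (x, p.2)) p.1) 2 volume :=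
    hψ'.of_le hψdiff.measurable_fderiv_comp_prodMk_left.aestronglyMeasurable
      (ae_of_all _ fun p => (hψdiff p).norm_fderiv_comp_prodMk_left_le)
  rw [← Real.norm_eq_abs]
  refine norm_integral_le_of_lintegral_enorm_le (by positivity) ?_
  calc ∫⁻ p : E × E, ‖V (p.1 - p.2) * ‖ψ p‖ ^ 2‖ₑ
      = ∫⁻ p : E × E, ‖V (p.1 - p.2)‖ₑ * ‖ψ p‖ₑ ^ 2 := by simp [enorm_mul, enorm_pow]
    _ ≤ ENNReal.ofReal (ε / C) * (∫⁻ p : E × E, ‖V (p.1 - p.2)‖ₑ ^ 2 * ‖ψ p‖ₑ ^ 2)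
        + ENNReal.ofReal (4 * (ε / C))⁻¹ * ∫⁻ p, ‖ψ p‖ₑ ^ 2 :=
        lintegral_enorm_mul_le (by positivity) _ (hψdiff.continuous.measurable.enorm.pow_const 2)
    _ ≤ ENNReal.ofReal (ε / C) * (ENNReal.ofReal C * ((∫⁻ p, ‖ψ p‖ₑ ^ 2)
          + ∫⁻ p : E × E, ‖fderiv ℝ (fun x => ψ (x, p.2)) p.1‖ₑ ^ 2))
        + ENNReal.ofReal (4 * (ε / C))⁻¹ * ∫⁻ p, ‖ψ p‖ₑ ^ 2 := by
        gcongr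
        exact hV.lintegral_comp_sub_prod_le hC hψdiff
    _ = _ := by
        rw [hψ.lintegral_enorm_sq_eq, hDψ.lintegral_enorm_sq_eq, ← ENNReal.ofReal_add,
          ← ENNReal.ofReal_mul, ← ENNReal.ofReal_mul, ← ENNReal.ofReal_mul,
          ← ENNReal.ofReal_add]
        all_goals try positivity
        congr 1
        field_simp
        ring

end FormBound

theorem two_body_form_bound_general
    (V : EuclideanSpace ℝ (Fin 3) → ℝ) (C : ℝ) (hC : 0 < C)
    (hV : ∀ φ : EuclideanSpace ℝ (Fin 3) → ℂ, Differentiable ℝ φ →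
      MemLp φ 2 volume → MemLp (fun x => fderiv ℝ φ x) 2 volume →
      ∫⁻ x, (‖V x‖₊ : ℝ≥0∞) ^ 2 * (‖φ x‖₊ : ℝ≥0∞) ^ 2
        ≤ ENNReal.ofReal (C * ((∫ x, ‖φ x‖ ^ 2) + ∫ x, ‖fderiv ℝ φ x‖ ^ 2)))
    (ε : ℝ) (hε : 0 < ε)
    (ψ : EuclideanSpace ℝ (Fin 3) × EuclideanSpace ℝ (Fin 3) → ℂ)
    (hψdiff : Differentiable ℝ ψ)
    (hψ : MemLp ψ 2 volume) (hψ' : MemLp (fun p => fderiv ℝ ψ p) 2 volume) :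
    |∫ p : EuclideanSpace ℝ (Fin 3) × EuclideanSpace ℝ (Fin 3),
        V (p.1 - p.2) * ‖ψ p‖ ^ 2|
      ≤ ε * (∫ p : EuclideanSpace ℝ (Fin 3) × EuclideanSpace ℝ (Fin 3),
            ‖fderiv ℝ (fun x => ψ (x, p.2)) p.1‖ ^ 2)
        + (ε + C / (4 * ε))
          * ∫ p : EuclideanSpace ℝ (Fin 3) × EuclideanSpace ℝ (Fin 3), ‖ψ p‖ ^ 2 :=
  SqFormBounded.abs_integral_comp_sub_mul_le hV hC hε hψdiff hψ hψ'

/-- If `V` satisfies the quadratic-form bound `V² ≤ C(1−Δ)`, i.e.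
`∫ |V|²|φ|² ≤ C(∫|φ|² + ∫|∇φ|²)` for all differentiable `φ : ℝ³ → ℂ` with `φ, ∇φ ∈ L²`,
then for every `ε > 0` the relative form bound
`|∬ V(x−y)|ψ(x,y)|²| ≤ ε ∬ |∇ₓψ|² + (ε + C/(4ε)) ∬ |ψ|²` holds for every differentiable
`ψ : ℝ³ × ℝ³ → ℂ` with `ψ` and its full gradient square-integrable on `ℝ⁶`. -/
theorem two_body_form_bound
    (V : EuclideanSpace ℝ (Fin 3) → ℝ) (hVm : Measurable V) (C : ℝ) (hC : 0 < C)
    (hV : ∀ φ : EuclideanSpace ℝ (Fin 3) → ℂ, Differentiable ℝ φ →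
      MemLp φ 2 volume → MemLp (fun x => fderiv ℝ φ x) 2 volume →
      ∫⁻ x, (‖V x‖₊ : ℝ≥0∞) ^ 2 * (‖φ x‖₊ : ℝ≥0∞) ^ 2
        ≤ ENNReal.ofReal (C * ((∫ x, ‖φ x‖ ^ 2) + ∫ x, ‖fderiv ℝ φ x‖ ^ 2)))
    (ε : ℝ) (hε : 0 < ε)
    (ψ : EuclideanSpace ℝ (Fin 3) × EuclideanSpace ℝ (Fin 3) → ℂ)
    (hψdiff : Differentiable ℝ ψ)
    (hψ : MemLp ψ 2 volume) (hψ' : MemLp (fun p => fderiv ℝ ψ p) 2 volume) :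
    |∫ p : EuclideanSpace ℝ (Fin 3) × EuclideanSpace ℝ (Fin 3),
        V (p.1 - p.2) * ‖ψ p‖ ^ 2|
      ≤ ε * (∫ p : EuclideanSpace ℝ (Fin 3) × EuclideanSpace ℝ (Fin 3),
            ‖fderiv ℝ (fun x => ψ (x, p.2)) p.1‖ ^ 2)
        + (ε + C / (4 * ε))
          * ∫ p : EuclideanSpace ℝ (Fin 3) × EuclideanSpace ℝ (Fin 3), ‖ψ p‖ ^ 2 :=
  two_body_form_bound_general V C hC hV ε hε ψ hψdiff hψ hψ'
end

section
/- Let N ≥ 2 be an integer, ℓ > 0, C > 0, M ≥ 0. Let u ∈ L²(ℝ³) with |u(x)| ≤ M almost everywhere, let Φ ∈ L²((ℝ³)^{N−1}), and for each j = 1, …, N−1 let f_j : ℝ³ → [0,1] be measurable with 1 − f_j(z)² ≤ (C/N)·1_{\{|z| ≤ ℓ\}}/|z| for almost every z ≠ 0. Define Ψ(x, y₁, …, y_{N−1}) := u(x) · (∏_{j=1}^{N−1} f_j(x − y_j)) · Φ(y₁, …, y_{N−1}). Then Ψ ∈ L²((ℝ³)^N) and ‖u‖₂² ‖Φ‖₂²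 ≥ ‖Ψ‖₂² ≥ (‖u‖₂² − 2π C ℓ² M² (N−1)/N) ‖Φ‖₂². -/
/-!
Since `‖Ψ(x, y)‖² = |u(x)|² |Φ(y)|² ∏ⱼ fⱼ(x − yⱼ)²` with the product in `[0, 1]`, the upper bound
is immediate. For the lower bound, the Weierstrass inequality `∏ aⱼ ≥ 1 − ∑ (1 − aⱼ)` bounds the
defect `|u(x)|² |Φ(y)|² − ‖Ψ(x, y)‖²` by `M² ∑ⱼ (C/N) 𝟙_{|x−yⱼ|≤ℓ} |x − yⱼ|⁻¹ |Φ(y)|²`, and the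
shear `(x, y) ↦ (x − yⱼ, y)` turns each term into `(C/N) M² ‖Φ‖² ∫_{|z|≤ℓ} |z|⁻¹ dz`, where the
radial integral is `2πℓ²`.
-/

open MeasureTheory
open scoped Real

noncomputable section

/-- The correlated trial state `Ψ(x, y₁, …, y_{N−1}) = u(x) ∏ⱼ fⱼ(x − yⱼ) Φ(y₁, …, y_{N−1})`. -/
def correlatedTrial (N : ℕ) (u : EuclideanSpace ℝ (Fin 3) → ℂ)
    (f : Fin (N - 1) → EuclideanSpace ℝ (Fin 3) → ℝ)
    (Φ : (Fin (N - 1) → EuclideanSpace ℝ (Fin 3)) → ℂ) :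
    EuclideanSpace ℝ (Fin 3) × (Fin (N - 1) → EuclideanSpace ℝ (Fin 3)) → ℂ :=
  fun p => u p.1 * (∏ j, ((f j (p.1 - p.2 j) : ℝ) : ℂ)) * Φ p.2

section RadialKernel

open Set

variable {E : Type*} [NormedAddCommGroup E] [NormedSpace ℝ E] [FiniteDimensional ℝ E]
  [MeasurableSpace E] [BorelSpace E] (μ : Measure E) [μ.IsAddHaarMeasure]

lemma pow_succ_smul_ite_le_div_eqOn_Ioi (k : ℕ) (ℓ : ℝ) :
    EqOn (fun y : ℝ => y ^ (k + 1) • ((if y ≤ ℓ then (1 : ℝ) else 0) / y))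
      ((Ioc 0 ℓ).indicator fun y => y ^ k) (Ioi 0) := by
  intro y (hy : 0 < y)
  by_cases hyℓ : y ≤ ℓ
  · simp [hyℓ, hy, pow_succ, hy.ne']
  · simp [hyℓ]

lemma integrable_ite_norm_le_div_norm {k : ℕ} (hk : Module.finrank ℝ E = k + 2) (ℓ : ℝ) :
    Integrable (fun z : E => (if ‖z‖ ≤ ℓ then (1 : ℝ) else 0) / ‖z‖) μ := by
  have : Nontrivial E := Module.nontrivial_of_finrank_pos (R := ℝ) (by omega)
  rw [integrable_fun_norm_addHaar μ (f := fun r => (if r ≤ ℓ then (1 : ℝ) else 0) / r), hk,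
    show k + 2 - 1 = k + 1 from rfl, IntegrableOn,
    integrable_congr ((ae_restrict_mem measurableSet_Ioi).mono
      (pow_succ_smul_ite_le_div_eqOn_Ioi k ℓ)), integrable_indicator_iff measurableSet_Ioc]
  exact (continuous_pow k).integrableOn_Ioc.restrict

lemma integral_ite_norm_le_div_norm {k : ℕ} (hk : Module.finrank ℝ E = k + 2) {ℓ : ℝ}
    (hℓ : 0 ≤ ℓ) :
    ∫ z, (if ‖z‖ ≤ ℓ then (1 : ℝ) else 0) / ‖z‖ ∂μ
      = (k + 2) * μ.real (Metric.ball 0 1) * (ℓ ^ (k + 1) / (k + 1)) := by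
  have : Nontrivial E := Module.nontrivial_of_finrank_pos (R := ℝ) (by omega)
  rw [integral_fun_norm_addHaar μ (fun r => (if r ≤ ℓ then (1 : ℝ) else 0) / r), hk,
    show k + 2 - 1 = k + 1 from rfl,
    setIntegral_congr_fun measurableSet_Ioi (pow_succ_smul_ite_le_div_eqOn_Ioi k ℓ),
    setIntegral_indicator measurableSet_Ioc, inter_eq_right.mpr Ioc_subset_Ioi_self,
    ← intervalIntegral.integral_of_le hℓ, integral_pow, zero_pow k.succ_ne_zero, sub_zero,
    nsmul_eq_mul, smul_eq_mul]
  push_cast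
  ring

lemma integral_ite_norm_le_div_norm_fin_three {ℓ : ℝ} (hℓ : 0 ≤ ℓ) :
    ∫ z : EuclideanSpace ℝ (Fin 3), (if ‖z‖ ≤ ℓ then (1 : ℝ) else 0) / ‖z‖ = 2 * π * ℓ ^ 2 := by
  rw [integral_ite_norm_le_div_norm volume (k := 1) (by simp) hℓ, measureReal_def,
    EuclideanSpace.volume_ball_fin_three, ENNReal.toReal_mul,
    ENNReal.toReal_ofReal (by positivity)]
  simp only [ENNReal.ofReal_one, one_pow, ENNReal.toReal_one, one_mul]
  push_cast
  ring

end RadialKernel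

section Shear

variable {G Y : Type*} [MeasurableSpace G] [AddGroup G] [MeasurableAdd₂ G] [MeasurableNeg G]
  [MeasurableSpace Y] (μ : Measure G) [SFinite μ] [μ.IsAddRightInvariant]
  (ν : Measure Y) [SFinite ν] {τ : Y → G}

lemma measurePreserving_sub_comp_prod (hτ : Measurable τ) :
    MeasurePreserving (fun p : G × Y => (p.1 - τ p.2, p.2)) (μ.prod ν) (μ.prod ν) :=
  (Measure.measurePreserving_swap.comp <| (MeasurePreserving.id ν).skew_product
    (g := fun y x => x - τ y) (by fun_prop)
    (ae_of_all _ fun y => (measurePreserving_sub_right μ (τ y)).map_eq)).comp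
    Measure.measurePreserving_swap

lemma ae_prod_comp_sub (hτ : Measurable τ) {P : G → Prop} (hP : ∀ᵐ z ∂μ, P z) :
    ∀ᵐ p ∂μ.prod ν, P (p.1 - τ p.2) :=
  (Measure.quasiMeasurePreserving_fst.comp
    (measurePreserving_sub_comp_prod μ ν hτ).quasiMeasurePreserving).ae hP

lemma integrable_comp_sub_mul (hτ : Measurable τ) {g : G → ℝ} {h : Y → ℝ}
    (hg : Integrable g μ) (hh : Integrable h ν) :
    Integrable (fun p : G × Y => g (p.1 - τ p.2) * h p.2) (μ.prod ν) :=
  (measurePreserving_sub_comp_prod μ ν hτ).integrable_comp_of_integrable (hg.mul_prod hh)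

lemma integral_comp_sub_mul (hτ : Measurable τ) {g : G → ℝ} {h : Y → ℝ}
    (hg : Integrable g μ) (hh : Integrable h ν) :
    ∫ p : G × Y, g (p.1 - τ p.2) * h p.2 ∂μ.prod ν = (∫ z, g z ∂μ) * ∫ y, h y ∂ν := by
  have hmp := measurePreserving_sub_comp_prod μ ν hτ
  have hprod := (hg.mul_prod hh).aestronglyMeasurable
  calc _ = ∫ q, g q.1 * h q.2 ∂(μ.prod ν).map fun p => (p.1 - τ p.2, p.2) :=
        (integral_map hmp.measurable.aemeasurable (by rwa [hmp.map_eq])).symm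
    _ = _ := by rw [hmp.map_eq, integral_prod_mul]

end Shear

theorem Finset.one_sub_sum_le_prod {ι R : Type*} [CommRing R] [LinearOrder R]
    [IsStrictOrderedRing R] (s : Finset ι) {a : ι → R} (h0 : ∀ i ∈ s, 0 ≤ a i)
    (h1 : ∀ i ∈ s, a i ≤ 1) :
    1 - ∑ i ∈ s, (1 - a i) ≤ ∏ i ∈ s, a i := by
  classical
  induction s using Finset.induction_on with
  | empty => simp
  | insert x s hx ih =>
    rw [Finset.prod_insert hx, Finset.sum_insert hx]
    have hS : 0 ≤ ∑ i ∈ s, (1 - a i) :=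
      Finset.sum_nonneg fun i hi => sub_nonneg.2 (h1 i (Finset.mem_insert_of_mem hi))
    have hx0 := h0 x (Finset.mem_insert_self x s)
    have hx1 := h1 x (Finset.mem_insert_self x s)
    have ih := ih (fun i hi => h0 i (Finset.mem_insert_of_mem hi))
      (fun i hi => h1 i (Finset.mem_insert_of_mem hi))
    calc 1 - ((1 - a x) + ∑ i ∈ s, (1 - a i))
        ≤ a x * (1 - ∑ i ∈ s, (1 - a i)) := by nlinarith [mul_le_of_le_one_left hS hx1]
      _ ≤ a x * ∏ i ∈ s, a i := mul_le_mul_of_nonneg_left ih hx0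

local notation "ℝ³" => EuclideanSpace ℝ (Fin 3)

section CorrelatedTrial

variable {N : ℕ} {u : ℝ³ → ℂ}
  {f : Fin (N - 1) → ℝ³ → ℝ} {Φ : (Fin (N - 1) → ℝ³) → ℂ}

lemma norm_correlatedTrial_sq (p : ℝ³ × (Fin (N - 1) → ℝ³)) :
    ‖correlatedTrial N u f Φ p‖ ^ 2
      = ‖u p.1‖ ^ 2 * ‖Φ p.2‖ ^ 2 * ∏ j, f j (p.1 - p.2 j) ^ 2 := by
  simp only [correlatedTrial, norm_mul, norm_prod, Complex.norm_real, Real.norm_eq_abs, mul_pow,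
    ← Finset.prod_pow, sq_abs]
  ring

lemma norm_correlatedTrial_sq_le (hf : ∀ j z, |f j z| ≤ 1) (p) :
    ‖correlatedTrial N u f Φ p‖ ^ 2 ≤ ‖u p.1‖ ^ 2 * ‖Φ p.2‖ ^ 2 := by
  rw [norm_correlatedTrial_sq]
  exact mul_le_of_le_one_right (by positivity) (Finset.prod_le_one (fun j _ => sq_nonneg _)
    fun j _ => sq_le_one_iff_abs_le_one _ |>.2 (hf j _))

lemma norm_sq_mul_sub_norm_correlatedTrial_sq_le (hf : ∀ j z, |f j z| ≤ 1) (p) :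
    ‖u p.1‖ ^ 2 * ‖Φ p.2‖ ^ 2 - ‖correlatedTrial N u f Φ p‖ ^ 2
      ≤ ∑ j, ‖u p.1‖ ^ 2 * (1 - f j (p.1 - p.2 j) ^ 2) * ‖Φ p.2‖ ^ 2 := by
  have hprod := Finset.univ.one_sub_sum_le_prod (a := fun j => f j (p.1 - p.2 j) ^ 2)
    (fun j _ => sq_nonneg _) fun j _ => sq_le_one_iff_abs_le_one _ |>.2 (hf j _)
  have hw : 0 ≤ ‖u p.1‖ ^ 2 * ‖Φ p.2‖ ^ 2 := by positivity
  rw [norm_correlatedTrial_sq]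
  calc _ = ‖u p.1‖ ^ 2 * ‖Φ p.2‖ ^ 2 * (1 - ∏ j, f j (p.1 - p.2 j) ^ 2) := by ring
    _ ≤ ‖u p.1‖ ^ 2 * ‖Φ p.2‖ ^ 2 * ∑ j, (1 - f j (p.1 - p.2 j) ^ 2) :=
        mul_le_mul_of_nonneg_left (by linarith) hw
    _ = _ := by rw [Finset.mul_sum]; exact Finset.sum_congr rfl fun j _ => by ring

lemma aestronglyMeasurable_correlatedTrial (hu : AEStronglyMeasurable u)
    (hΦ : AEStronglyMeasurable Φ) (hfm : ∀ j, Measurable (f j)) :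
    AEStronglyMeasurable (correlatedTrial N u f Φ) := by
  have hprod : Measurable fun p : ℝ³ × (Fin (N - 1) → ℝ³) =>
      ∏ j, ((f j (p.1 - p.2 j) : ℝ) : ℂ) := by
    fun_prop
  exact ((hu.comp_quasiMeasurePreserving Measure.quasiMeasurePreserving_fst).mul
    hprod.aestronglyMeasurable).mul
    (hΦ.comp_quasiMeasurePreserving Measure.quasiMeasurePreserving_snd)

lemma integrable_norm_sq_mul_norm_sq (hu : MemLp u 2) (hΦ : MemLp Φ 2) :
    Integrable fun p : ℝ³ × (Fin (N - 1) → ℝ³) => ‖u p.1‖ ^ 2 * ‖Φ p.2‖ ^ 2 :=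
  ((memLp_two_iff_integrable_sq_norm hu.1).1 hu).mul_prod
    ((memLp_two_iff_integrable_sq_norm hΦ.1).1 hΦ)

lemma integrable_norm_correlatedTrial_sq (hu : MemLp u 2) (hΦ : MemLp Φ 2)
    (hfm : ∀ j, Measurable (f j)) (hf : ∀ j z, |f j z| ≤ 1) :
    Integrable fun p => ‖correlatedTrial N u f Φ p‖ ^ 2 :=
  (integrable_norm_sq_mul_norm_sq hu hΦ).mono'
    ((aestronglyMeasurable_correlatedTrial hu.1 hΦ.1 hfm).norm.pow 2)
    (ae_of_all _ fun p => by
      simpa only [norm_pow, norm_norm] using norm_correlatedTrial_sq_le hf p)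

lemma memLp_correlatedTrial (hu : MemLp u 2) (hΦ : MemLp Φ 2)
    (hfm : ∀ j, Measurable (f j)) (hf : ∀ j z, |f j z| ≤ 1) :
    MemLp (correlatedTrial N u f Φ) 2 :=
  (memLp_two_iff_integrable_sq_norm (aestronglyMeasurable_correlatedTrial hu.1 hΦ.1 hfm)).2
    (integrable_norm_correlatedTrial_sq hu hΦ hfm hf)

lemma integral_norm_correlatedTrial_sq_le (hu : MemLp u 2) (hΦ : MemLp Φ 2)
    (hfm : ∀ j, Measurable (f j)) (hf : ∀ j z, |f j z| ≤ 1) :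
    ∫ p, ‖correlatedTrial N u f Φ p‖ ^ 2 ≤ (∫ x, ‖u x‖ ^ 2) * ∫ y, ‖Φ y‖ ^ 2 := by
  rw [← integral_prod_mul]
  exact integral_mono (integrable_norm_correlatedTrial_sq hu hΦ hfm hf)
    (integrable_norm_sq_mul_norm_sq hu hΦ) (norm_correlatedTrial_sq_le hf)

lemma ae_norm_sq_mul_sub_norm_correlatedTrial_sq_le {M : ℝ} {K : ℝ³ → ℝ}
    (huM : ∀ᵐ x, ‖u x‖ ≤ M) (hf : ∀ j z, |f j z| ≤ 1)
    (hK : ∀ j, ∀ᵐ z, M ^ 2 * (1 - f j z ^ 2) ≤ K z) :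
    ∀ᵐ p, ‖u p.1‖ ^ 2 * ‖Φ p.2‖ ^ 2 - ‖correlatedTrial N u f Φ p‖ ^ 2
      ≤ ∑ j, K (p.1 - p.2 j) * ‖Φ p.2‖ ^ 2 := by
  have hj : ∀ j, ∀ᵐ p : ℝ³ × (Fin (N - 1) → ℝ³),
      ‖u p.1‖ ^ 2 * (1 - f j (p.1 - p.2 j) ^ 2) * ‖Φ p.2‖ ^ 2
        ≤ K (p.1 - p.2 j) * ‖Φ p.2‖ ^ 2 := fun j => by
    filter_upwards [Measure.quasiMeasurePreserving_fst.ae huM,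
      ae_prod_comp_sub volume volume (measurable_pi_apply j) (hK j)] with p hup hKp
    have hf2 : 0 ≤ 1 - f j (p.1 - p.2 j) ^ 2 :=
      sub_nonneg.2 (sq_le_one_iff_abs_le_one _ |>.2 (hf j _))
    gcongr
    exact (mul_le_mul_of_nonneg_right (pow_le_pow_left₀ (norm_nonneg _) hup 2) hf2).trans hKp
  filter_upwards [ae_all_iff.2 hj] with p hp
  exact (norm_sq_mul_sub_norm_correlatedTrial_sq_le hf p).trans
    (Finset.sum_le_sum fun j _ => hp j)

lemma sub_le_integral_norm_correlatedTrial_sq {M : ℝ} {K : ℝ³ → ℝ}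
    (hu : MemLp u 2) (huM : ∀ᵐ x, ‖u x‖ ≤ M) (hΦ : MemLp Φ 2) (hfm : ∀ j, Measurable (f j))
    (hf : ∀ j z, |f j z| ≤ 1) (hKint : Integrable K)
    (hK : ∀ j, ∀ᵐ z, M ^ 2 * (1 - f j z ^ 2) ≤ K z) :
    (∫ x, ‖u x‖ ^ 2) * (∫ y, ‖Φ y‖ ^ 2) - (N - 1 : ℕ) * (∫ z, K z) * ∫ y, ‖Φ y‖ ^ 2
      ≤ ∫ p, ‖correlatedTrial N u f Φ p‖ ^ 2 := by
  have hw := integrable_norm_sq_mul_norm_sq (N := N) hu hΦ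
  have hΨ := integrable_norm_correlatedTrial_sq hu hΦ hfm hf
  have hΦ2 : Integrable fun y => ‖Φ y‖ ^ 2 := (memLp_two_iff_integrable_sq_norm hΦ.1).1 hΦ
  have hKΦ (j : Fin (N - 1)) : Integrable fun p : ℝ³ × (Fin (N - 1) → ℝ³) =>
      K (p.1 - p.2 j) * ‖Φ p.2‖ ^ 2 :=
    integrable_comp_sub_mul volume volume (measurable_pi_apply j) hKint hΦ2
  have hKΦ_integral (j : Fin (N - 1)) : ∫ p : ℝ³ × (Fin (N - 1) → ℝ³),
      K (p.1 - p.2 j) * ‖Φ p.2‖ ^ 2 = (∫ z, K z) * ∫ y, ‖Φ y‖ ^ 2 :=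
    integral_comp_sub_mul volume volume (measurable_pi_apply j) hKint hΦ2
  have hw_integral : ∫ p : ℝ³ × (Fin (N - 1) → ℝ³), ‖u p.1‖ ^ 2 * ‖Φ p.2‖ ^ 2
      = (∫ x, ‖u x‖ ^ 2) * ∫ y, ‖Φ y‖ ^ 2 :=
    integral_prod_mul (fun x => ‖u x‖ ^ 2) fun y => ‖Φ y‖ ^ 2
  have hmono : ∫ p : ℝ³ × (Fin (N - 1) → ℝ³),
        (‖u p.1‖ ^ 2 * ‖Φ p.2‖ ^ 2 - ‖correlatedTrial N u f Φ p‖ ^ 2)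
      ≤ ∫ p : ℝ³ × (Fin (N - 1) → ℝ³), ∑ j, K (p.1 - p.2 j) * ‖Φ p.2‖ ^ 2 :=
    integral_mono_ae (hw.sub hΨ) (integrable_finsetSum _ fun j _ => hKΦ j)
      (ae_norm_sq_mul_sub_norm_correlatedTrial_sq_le huM hf hK)
  rw [integral_sub hw hΨ, integral_finsetSum _ fun j _ => hKΦ j, hw_integral] at hmono
  simp only [hKΦ_integral, Finset.sum_const, Finset.card_univ, Fintype.card_fin,
    nsmul_eq_mul] at hmono
  linarith

lemma le_integral_norm_correlatedTrial_sq {ℓ C M : ℝ} (hℓ : 0 < ℓ) (hu : MemLp u 2)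
    (huM : ∀ᵐ x, ‖u x‖ ≤ M) (hΦ : MemLp Φ 2) (hfm : ∀ j, Measurable (f j))
    (hf : ∀ j z, |f j z| ≤ 1)
    (hfbd : ∀ j, ∀ᵐ z : ℝ³, z ≠ 0 →
      1 - (f j z) ^ 2 ≤ C / N * (if ‖z‖ ≤ ℓ then (1 : ℝ) else 0) / ‖z‖) :
    ((∫ x, ‖u x‖ ^ 2) - 2 * π * C * ℓ ^ 2 * M ^ 2 * ((N : ℝ) - 1) / N) * (∫ y, ‖Φ y‖ ^ 2)
      ≤ ∫ p, ‖correlatedTrial N u f Φ p‖ ^ 2 := by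
  have hKint : Integrable fun z : ℝ³ =>
      M ^ 2 * (C / N * (if ‖z‖ ≤ ℓ then (1 : ℝ) else 0) / ‖z‖) := by
    simp_rw [mul_div_assoc]
    exact ((integrable_ite_norm_le_div_norm volume (k := 1) (by simp) ℓ).const_mul _).const_mul _
  have hK_integral : ∫ z : ℝ³, M ^ 2 * (C / N * (if ‖z‖ ≤ ℓ then (1 : ℝ) else 0) / ‖z‖)
      = 2 * π * C * ℓ ^ 2 * M ^ 2 / N := by
    simp_rw [mul_div_assoc]
    rw [integral_const_mul, integral_const_mul, integral_ite_norm_le_div_norm_fin_three hℓ.le]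
    ring
  have hK (j) : ∀ᵐ z : ℝ³,
      M ^ 2 * (1 - f j z ^ 2) ≤ M ^ 2 * (C / N * (if ‖z‖ ≤ ℓ then (1 : ℝ) else 0) / ‖z‖) := by
    filter_upwards [hfbd j, Measure.ae_ne volume 0] with z hz hz0
    exact mul_le_mul_of_nonneg_left (hz hz0) (sq_nonneg M)
  -- also at `N = 0`, where both sides are junk values `_ / 0 = 0`
  have hcard : ((N - 1 : ℕ) : ℝ) * (2 * π * C * ℓ ^ 2 * M ^ 2 / N)
      = 2 * π * C * ℓ ^ 2 * M ^ 2 * ((N : ℝ) - 1) / N := by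
    rcases N with _ | N <;> simp [mul_div_assoc, mul_comm]
  have := sub_le_integral_norm_correlatedTrial_sq hu huM hΦ hfm hf hKint hK
  rw [hK_integral, hcard] at this
  linarith

end CorrelatedTrial

theorem correlatedTrial_norm_bounds_general
    (N : ℕ) (ℓ C M : ℝ) (hℓ : 0 < ℓ)
    (u : EuclideanSpace ℝ (Fin 3) → ℂ) (hu : MemLp u 2 volume)
    (huM : ∀ᵐ x, ‖u x‖ ≤ M)
    (Φ : (Fin (N - 1) → EuclideanSpace ℝ (Fin 3)) → ℂ) (hΦ : MemLp Φ 2 volume)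
    (f : Fin (N - 1) → EuclideanSpace ℝ (Fin 3) → ℝ)
    (hfm : ∀ j, Measurable (f j))
    (hf01 : ∀ j z, 0 ≤ f j z ∧ f j z ≤ 1)
    (hfbd : ∀ j, ∀ᵐ z : EuclideanSpace ℝ (Fin 3), z ≠ 0 →
      1 - (f j z) ^ 2 ≤ C / N * (if ‖z‖ ≤ ℓ then (1 : ℝ) else 0) / ‖z‖) :
    MemLp (correlatedTrial N u f Φ) 2 volume
    ∧ (∫ p, ‖correlatedTrial N u f Φ p‖ ^ 2)
        ≤ (∫ x, ‖u x‖ ^ 2) * ∫ y, ‖Φ y‖ ^ 2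
    ∧ ((∫ x, ‖u x‖ ^ 2) - 2 * π * C * ℓ ^ 2 * M ^ 2 * ((N : ℝ) - 1) / N)
          * (∫ y, ‖Φ y‖ ^ 2)
        ≤ ∫ p, ‖correlatedTrial N u f Φ p‖ ^ 2 := by
  have hf : ∀ j z, |f j z| ≤ 1 := fun j z => abs_le.2 ⟨by linarith [hf01 j z], (hf01 j z).2⟩
  exact ⟨memLp_correlatedTrial hu hΦ hfm hf, integral_norm_correlatedTrial_sq_le hu hΦ hfm hf,
    le_integral_norm_correlatedTrial_sq hℓ hu huM hΦ hfm hf hfbd⟩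

/-- Norm comparison for the correlated trial state: if `|u| ≤ M` a.e.,
`0 ≤ fⱼ ≤ 1` and `1 − fⱼ(z)² ≤ (C/N) 𝟙_{|z|≤ℓ}/|z|` a.e., then `Ψ ∈ L²` and
`‖u‖₂² ‖Φ‖₂² ≥ ‖Ψ‖₂² ≥ (‖u‖₂² − 2πCℓ²M²(N−1)/N) ‖Φ‖₂²`. -/
theorem correlatedTrial_norm_bounds
    (N : ℕ) (hN : 2 ≤ N) (ℓ C M : ℝ) (hℓ : 0 < ℓ) (hC : 0 < C) (hM : 0 ≤ M)
    (u : EuclideanSpace ℝ (Fin 3) → ℂ) (hu : MemLp u 2 volume)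
    (huM : ∀ᵐ x, ‖u x‖ ≤ M)
    (Φ : (Fin (N - 1) → EuclideanSpace ℝ (Fin 3)) → ℂ) (hΦ : MemLp Φ 2 volume)
    (f : Fin (N - 1) → EuclideanSpace ℝ (Fin 3) → ℝ)
    (hfm : ∀ j, Measurable (f j))
    (hf01 : ∀ j z, 0 ≤ f j z ∧ f j z ≤ 1)
    (hfbd : ∀ j, ∀ᵐ z : EuclideanSpace ℝ (Fin 3), z ≠ 0 →
      1 - (f j z) ^ 2 ≤ C / N * (if ‖z‖ ≤ ℓ then (1 : ℝ) else 0) / ‖z‖) :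
    MemLp (correlatedTrial N u f Φ) 2 volume
    ∧ (∫ p, ‖correlatedTrial N u f Φ p‖ ^ 2)
        ≤ (∫ x, ‖u x‖ ^ 2) * ∫ y, ‖Φ y‖ ^ 2
    ∧ ((∫ x, ‖u x‖ ^ 2) - 2 * π * C * ℓ ^ 2 * M ^ 2 * ((N : ℝ) - 1) / N)
          * (∫ y, ‖Φ y‖ ^ 2)
        ≤ ∫ p, ‖correlatedTrial N u f Φ p‖ ^ 2 :=
  correlatedTrial_norm_bounds_general N ℓ C M hℓ u hu huM Φ hΦ f hfm hf01 hfbd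

end
end
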